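/- arXiv:1410.2199 — 5 statements merged into one kernel-verified Lean document; each statement's English description precedes it below -/
import Mathlib

section
/- Let f_n : X_n → X_{n+1} be a sequence of maps and fix k ≥ 1. Define the k-th power system by X^{[k]}_n = X_{kn} and f^{[k]}_n = f_{kn}^k (the composition of k consecutive maps starting at time kn), and define φ^{[k]}_n = ∑_{j=0}^{k-1} φ_{kn+j} ∘ f_{kn}^j. If F ⊆ X_0 is (nk, ε)-spanning for the original system, then F is (n, ε)-spanning for the power system, and consequently R(n, ε; φ^{[k]}; f^{[k]}) ≤ R(nk, ε; φ; f), which implies the topological pressure satisfies P_top(f^{[k]}; φ^{[k]}) ≤ k · P_top(f; φ). -/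
open Filter

/-- The composition `f_0^j = f_{j-1} ∘ ⋯ ∘ f_0 : X 0 → X j` of a time-dependent system. -/
def it0 {X : ℕ → Type*} (f : ∀ n, X n → X (n + 1)) : ∀ j, X 0 → X j
  | 0 => id
  | j + 1 => fun x => f j (it0 f j x)

/-- `F ⊆ X 0` is `(m,ε)`-spanning for the original system. -/
def IsSpanSet {X : ℕ → Type*} [∀ n, MetricSpace (X n)] (f : ∀ n, X n → X (n + 1))
    (m : ℕ) (ε : ℝ) (F : Finset (X 0)) : Prop :=
  ∀ x : X 0, ∃ y ∈ F, ∀ j < m, dist (it0 f j x) (it0 f j y) < ε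

/-- `F ⊆ X 0` is `(n,ε)`-spanning for the `k`-th power system: its Bowen metric of
order `n` only samples the times `0, k, 2k, …, (n-1)k`. -/
def IsSpanSetPow {X : ℕ → Type*} [∀ n, MetricSpace (X n)] (f : ∀ n, X n → X (n + 1))
    (k n : ℕ) (ε : ℝ) (F : Finset (X 0)) : Prop :=
  ∀ x : X 0, ∃ y ∈ F, ∀ j < n, dist (it0 f (j * k) x) (it0 f (j * k) y) < ε

/-- `R(m,ε;φ;f)`: infimum over `(m,ε)`-spanning sets of `∑_{x∈F} exp (S_m φ (x))`. -/
noncomputable def Rval {X : ℕ → Type*} [∀ n, MetricSpace (X n)]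
    (f : ∀ n, X n → X (n + 1)) (φ : ∀ n, X n → ℝ) (m : ℕ) (ε : ℝ) : ℝ :=
  sInf {r : ℝ | ∃ F : Finset (X 0), IsSpanSet f m ε F ∧
    r = ∑ x ∈ F, Real.exp (∑ i ∈ Finset.range m, φ i (it0 f i x))}

/-- `R(n,ε;φ^{[k]};f^{[k]})`: infimum over power-spanning sets; note that the Birkhoff sum
`S_n φ^{[k]}(x)` of the power potentials equals `S_{nk} φ (x)`. -/
noncomputable def RvalPow {X : ℕ → Type*} [∀ n, MetricSpace (X n)]
    (f : ∀ n, X n → X (n + 1)) (φ : ∀ n, X n → ℝ) (k n : ℕ) (ε : ℝ) : ℝ :=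
  sInf {r : ℝ | ∃ F : Finset (X 0), IsSpanSetPow f k n ε F ∧
    r = ∑ x ∈ F, Real.exp (∑ i ∈ Finset.range (n * k), φ i (it0 f i x))}

/-- Topological pressure `P_top(f;φ) = lim_{ε→0} limsup_n (1/n) log R(n,ε;φ;f)`,
realized (by antitonicity in `ε`) as the supremum over `ε > 0`, valued in `EReal`. -/
noncomputable def Ptop {X : ℕ → Type*} [∀ n, MetricSpace (X n)]
    (f : ∀ n, X n → X (n + 1)) (φ : ∀ n, X n → ℝ) : EReal :=
  ⨆ (ε : ℝ) (_ : 0 < ε),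
    limsup (fun n : ℕ => ((Real.log (Rval f φ n ε) / n : ℝ) : EReal)) atTop

/-- Pressure `P_top(f^{[k]};φ^{[k]})` of the `k`-th power system. -/
noncomputable def PtopPow {X : ℕ → Type*} [∀ n, MetricSpace (X n)]
    (f : ∀ n, X n → X (n + 1)) (φ : ∀ n, X n → ℝ) (k : ℕ) : EReal :=
  ⨆ (ε : ℝ) (_ : 0 < ε),
    limsup (fun n : ℕ => ((Real.log (RvalPow f φ k n ε) / n : ℝ) : EReal)) atTop

section Aux

variable {X : ℕ → Type*} [∀ n, MetricSpace (X n)]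

lemma cont_it0 (f : ∀ n, X n → X (n + 1)) (hf : ∀ n, Continuous (f n)) :
    ∀ j, Continuous (it0 f j)
  | 0 => continuous_id
  | j + 1 => (hf j).comp (cont_it0 f hf j)

lemma exists_span [∀ n, CompactSpace (X n)] (f : ∀ n, X n → X (n + 1))
    (hf : ∀ n, Continuous (f n)) (m : ℕ) (ε : ℝ) (hε : 0 < ε) :
    ∃ F : Finset (X 0), IsSpanSet f m ε F := by
  obtain ⟨t, ht⟩ := IsCompact.elim_finite_subcover (isCompact_univ (X := X 0))
    (fun y : X 0 => {x | ∀ j < m, dist (it0 f j x) (it0 f j y) < ε})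
    (fun y => by
      show IsOpen {x | ∀ j < m, dist (it0 f j x) (it0 f j y) < ε}
      have : {x | ∀ j < m, dist (it0 f j x) (it0 f j y) < ε}
          = ⋂ j ∈ Finset.range m, {x | dist (it0 f j x) (it0 f j y) < ε} := by
        ext x; simp [Finset.mem_range]
      rw [this]
      exact isOpen_biInter_finset fun j _ =>
        isOpen_lt ((cont_it0 f hf j).dist continuous_const) continuous_const)
    (fun x _ => Set.mem_iUnion.mpr ⟨x, fun j _ => by simp [hε]⟩)
  refine ⟨t, fun x => ?_⟩
  obtain ⟨y, hy, hxy⟩ := Set.mem_iUnion₂.mp (ht (Set.mem_univ x))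
  exact ⟨y, hy, hxy⟩

lemma spanA (f : ∀ n, X n → X (n + 1)) {k : ℕ} (hk : 1 ≤ k) (n : ℕ) (ε : ℝ)
    (F : Finset (X 0)) (h : IsSpanSet f (n * k) ε F) : IsSpanSetPow f k n ε F := by
  intro x
  obtain ⟨y, hy, h2⟩ := h x
  exact ⟨y, hy, fun j hj => h2 _ (mul_lt_mul_of_pos_right hj (by omega))⟩

lemma rvalPow_le [∀ n, CompactSpace (X n)] (f : ∀ n, X n → X (n + 1))
    (hf : ∀ n, Continuous (f n)) (φ : ∀ n, X n → ℝ) {k : ℕ} (hk : 1 ≤ k)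
    (n : ℕ) (ε : ℝ) (hε : 0 < ε) : RvalPow f φ k n ε ≤ Rval f φ (n * k) ε := by
  obtain ⟨F₀, hF₀⟩ := exists_span f hf (n * k) ε hε
  refine csInf_le_csInf ⟨0, ?_⟩ ⟨_, F₀, hF₀, rfl⟩ ?_
  · rintro r ⟨F, -, rfl⟩
    exact Finset.sum_nonneg fun x _ => (Real.exp_pos _).le
  · rintro r ⟨F, hF, rfl⟩
    exact ⟨F, spanA f hk n ε F hF, rfl⟩

lemma rvalPow_pos [∀ n, CompactSpace (X n)] [Nonempty (X 0)] (f : ∀ n, X n → X (n + 1))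
    (hf : ∀ n, Continuous (f n)) (φ : ∀ n, X n → ℝ) (hφ : ∀ n, Continuous (φ n))
    {k : ℕ} (hk : 1 ≤ k) (n : ℕ) (ε : ℝ) (hε : 0 < ε) : 0 < RvalPow f φ k n ε := by
  have hg : Continuous (fun x : X 0 => ∑ i ∈ Finset.range (n * k), φ i (it0 f i x)) :=
    continuous_finset_sum _ fun i _ => (hφ i).comp (cont_it0 f hf i)
  obtain ⟨x₀, -, hmin'⟩ := (isCompact_univ (X := X 0)).exists_isMinOn
    Set.univ_nonempty hg.continuousOn
  have hmin : ∀ y : X 0, (fun x : X 0 => ∑ i ∈ Finset.range (n * k), φ i (it0 f i x)) x₀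
      ≤ ∑ i ∈ Finset.range (n * k), φ i (it0 f i y) := fun y => hmin' (Set.mem_univ y)
  set c := ∑ i ∈ Finset.range (n * k), φ i (it0 f i x₀) with hc
  obtain ⟨F₀, hF₀⟩ := exists_span f hf (n * k) ε hε
  have hne : {r : ℝ | ∃ F : Finset (X 0), IsSpanSetPow f k n ε F ∧
      r = ∑ x ∈ F, Real.exp (∑ i ∈ Finset.range (n * k), φ i (it0 f i x))}.Nonempty :=
    ⟨_, F₀, spanA f hk n ε F₀ hF₀, rfl⟩
  have hlb : ∀ r ∈ {r : ℝ | ∃ F : Finset (X 0), IsSpanSetPow f k n ε F ∧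
      r = ∑ x ∈ F, Real.exp (∑ i ∈ Finset.range (n * k), φ i (it0 f i x))},
      Real.exp c ≤ r := by
    rintro r ⟨F, hF, rfl⟩
    obtain ⟨y, hy, -⟩ := hF (Classical.arbitrary (X 0))
    calc Real.exp c ≤ Real.exp (∑ i ∈ Finset.range (n * k), φ i (it0 f i y)) :=
          Real.exp_le_exp.mpr (hmin y)
      _ ≤ _ := Finset.single_le_sum (f := fun x => Real.exp (∑ i ∈ Finset.range (n * k), φ i (it0 f i x))) (fun x _ => (Real.exp_pos _).le) hy
  exact lt_of_lt_of_le (Real.exp_pos c) (le_csInf hne hlb)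

lemma log_rvalPow_le [∀ n, CompactSpace (X n)] (f : ∀ n, X n → X (n + 1))
    (hf : ∀ n, Continuous (f n)) (φ : ∀ n, X n → ℝ) (hφ : ∀ n, Continuous (φ n))
    {k : ℕ} (hk : 1 ≤ k) (n : ℕ) (ε : ℝ) (hε : 0 < ε) :
    Real.log (RvalPow f φ k n ε) ≤ Real.log (Rval f φ (n * k) ε) := by
  cases isEmpty_or_nonempty (X 0) with
  | inl h =>
    have hsets : {r : ℝ | ∃ F : Finset (X 0), IsSpanSetPow f k n ε F ∧
        r = ∑ x ∈ F, Real.exp (∑ i ∈ Finset.range (n * k), φ i (it0 f i x))}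
        = {r : ℝ | ∃ F : Finset (X 0), IsSpanSet f (n * k) ε F ∧
        r = ∑ x ∈ F, Real.exp (∑ i ∈ Finset.range (n * k), φ i (it0 f i x))} := by
      ext r
      constructor
      · rintro ⟨F, -, rfl⟩; exact ⟨F, fun x => isEmptyElim x, rfl⟩
      · rintro ⟨F, -, rfl⟩; exact ⟨F, fun x => isEmptyElim x, rfl⟩
    unfold RvalPow Rval
    rw [hsets]
  | inr h =>
    exact Real.log_le_log (rvalPow_pos f hf φ hφ hk n ε hε)
      (rvalPow_le f hf φ hk n ε hε)

end Aux

lemma ereal_helper {k : ℝ} (hk : 0 < k) {L b : EReal}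
    (h : ∀ r : ℝ, L < (r : EReal) → b ≤ ((k * r : ℝ) : EReal)) :
    b ≤ (k : EReal) * L := by
  induction L using EReal.rec with
  | top =>
    rw [EReal.mul_top_of_pos (by exact_mod_cast hk)]
    exact le_top
  | bot =>
    rw [EReal.mul_bot_of_pos (by exact_mod_cast hk)]
    by_contra hb
    have hb' : (⊥ : EReal) < b := by
      rcases lt_or_ge ⊥ b with h' | h'
      · exact h'
      · exact absurd (le_bot_iff.mp h') (by rintro rfl; exact hb le_rfl)
    obtain ⟨z, _, hz2⟩ := EReal.exists_between_coe_real hb'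
    have := h ((z - 1) / k) (EReal.bot_lt_coe _)
    rw [mul_div_cancel₀ _ (ne_of_gt hk)] at this
    have : b < b := lt_of_le_of_lt (this.trans (by exact_mod_cast (by linarith : z - 1 ≤ z))) hz2
    exact lt_irrefl _ this
  | coe l =>
    rw [← EReal.coe_mul]
    by_contra hc
    push_neg at hc
    obtain ⟨z, hz1, hz2⟩ := EReal.exists_between_coe_real hc
    have hr : l < z / k := by
      rw [lt_div_iff₀ hk]
      have : k * l < z := by exact_mod_cast hz1
      linarith [this]
    have := h (z / k) (by exact_mod_cast hr)
    rw [mul_div_cancel₀ _ (ne_of_gt hk)] at this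
    exact lt_irrefl _ (lt_of_le_of_lt this hz2)

/-- If `F` is `(nk,ε)`-spanning for the original system then it is `(n,ε)`-spanning
for the `k`-th power system; consequently `R(n,ε;φ^{[k]};f^{[k]}) ≤ R(nk,ε;φ;f)`, and
hence `P_top(f^{[k]};φ^{[k]}) ≤ k ⬝ P_top(f;φ)`. -/
theorem stmt3 {X : ℕ → Type*} [∀ n, MetricSpace (X n)] [∀ n, CompactSpace (X n)]
    (f : ∀ n, X n → X (n + 1)) (hf : ∀ n, Continuous (f n))
    (φ : ∀ n, X n → ℝ) (hφ : ∀ n, Continuous (φ n))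
    (k : ℕ) (hk : 1 ≤ k) :
    (∀ (n : ℕ) (ε : ℝ) (F : Finset (X 0)),
        IsSpanSet f (n * k) ε F → IsSpanSetPow f k n ε F) ∧
    (∀ (n : ℕ) (ε : ℝ), 0 < ε → RvalPow f φ k n ε ≤ Rval f φ (n * k) ε) ∧
    PtopPow f φ k ≤ (k : EReal) * Ptop f φ := by
  refine ⟨fun n ε F hF => spanA f hk n ε F hF,
    fun n ε hε => rvalPow_le f hf φ hk n ε hε, ?_⟩
  have hk' : (0 : ℝ) < k := by exact_mod_cast hk
  rw [PtopPow]
  refine iSup₂_le fun ε hε => ?_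
  have hkE : ((k : ℝ) : EReal) = (k : EReal) := by norm_cast
  rw [← hkE]
  apply ereal_helper hk'
  intro r hr
  have hL : limsup (fun n : ℕ => ((Real.log (Rval f φ n ε) / n : ℝ) : EReal)) atTop
      < (r : EReal) := by
    refine lt_of_le_of_lt ?_ hr
    exact le_iSup₂ (f := fun (ε : ℝ) (_ : 0 < ε) =>
      limsup (fun n : ℕ => ((Real.log (Rval f φ n ε) / n : ℝ) : EReal)) atTop) ε hε
  have hev := eventually_lt_of_limsup_lt hL
  have htend : Tendsto (fun n : ℕ => n * k) atTop atTop :=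
    tendsto_atTop_mono (fun n => Nat.le_mul_of_pos_right n (by omega)) tendsto_id
  have hev2 : ∀ᶠ n : ℕ in atTop,
      Real.log (Rval f φ (n * k) ε) / ((n * k : ℕ) : ℝ) < r := by
    filter_upwards [htend.eventually hev] with n hn
    exact_mod_cast hn
  refine limsup_le_of_le (by isBoundedDefault) ?_
  filter_upwards [hev2, eventually_ge_atTop 1] with n hn hn1
  have hnpos : (0 : ℝ) < n := by exact_mod_cast hn1
  have hnkpos : (0 : ℝ) < ((n * k : ℕ) : ℝ) := by positivity
  rw [EReal.coe_le_coe_iff]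
  have h1 : Real.log (RvalPow f φ k n ε) / n ≤ Real.log (Rval f φ (n * k) ε) / n :=
    div_le_div_of_nonneg_right (log_rvalPow_le f hf φ hφ hk n ε hε) hnpos.le
  refine h1.trans (le_of_lt ?_)
  rw [div_lt_iff₀ hnpos]
  rw [div_lt_iff₀ hnkpos] at hn
  have hcast : ((n * k : ℕ) : ℝ) = (n : ℝ) * k := by push_cast; ring
  rw [hcast] at hn
  nlinarith [hn]
end

section
/- Let (X_n, d_n) be a uniformly totally bounded sequence of compact metric spaces (for every ε > 0 there is m so that each X_n is covered by m ε-balls) and f_n : X_n → X_{n+1} continuous maps forming a strongly uniformly expansive system with constant δ. Then the topological entropy satisfies h_top(f_∞) ≤ log m(δ/2), where m(δ/2) is the uniform number of δ/2-balls needed to cover each X_n. In particular h_top(f_∞) is finite. -/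
open Filter

/-- The composition `f_i^n = f_{i+n-1} ∘ ⋯ ∘ f_i : X i → X (i+n)`. -/
def itf {X : ℕ → Type*} (f : ∀ n, X n → X (n + 1)) : ∀ i n, X i → X (i + n)
  | _, 0 => id
  | i, n + 1 => fun x => f (i + n) (itf f i n x)

/-- `r_sep(n,ε)`: the maximal cardinality of an `(n,ε)`-separated subset of `X 0`
(w.r.t. the Bowen metric `d_{0,n} = max_{0 ≤ j ≤ n}`). -/
noncomputable def rsep {X : ℕ → Type*} [∀ n, MetricSpace (X n)]
    (f : ∀ n, X n → X (n + 1)) (n : ℕ) (ε : ℝ) : ℕ :=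
  sSup {k : ℕ | ∃ E : Finset (X 0),
    (∀ x ∈ E, ∀ y ∈ E, x ≠ y → ∃ j ≤ n, ε ≤ dist (it0 f j x) (it0 f j y)) ∧
    E.card = k}

/-- Topological entropy of the nonautonomous system, via separated sets:
`h_top = lim_{ε→0} limsup_n (1/n) log r_sep(n,ε)`, realized (by antitonicity in `ε`)
as the supremum over `ε > 0`, valued in `EReal`. -/
noncomputable def htop {X : ℕ → Type*} [∀ n, MetricSpace (X n)]
    (f : ∀ n, X n → X (n + 1)) : EReal :=
  ⨆ (ε : ℝ) (_ : 0 < ε),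
    limsup (fun n : ℕ => ((Real.log (rsep f n ε) / n : ℝ) : EReal)) atTop

lemma itf_it0 {X : ℕ → Type*} (f : ∀ n, X n → X (n + 1)) (i j : ℕ) (x : X 0) :
    itf f i j (it0 f i x) = it0 f (i + j) x := by
  induction j with
  | zero => rfl
  | succ j ih => exact congrArg (f (i + j)) ih

section Separated

variable {X : ℕ → Type*} [∀ n, MetricSpace (X n)] (f : ∀ n, X n → X (n + 1)) {δ ε : ℝ} {N : ℕ}

lemma dist_it0_lt_of_forall_dist_it0_lt
    (hN : ∀ i, ∀ x y : X i,
      (∀ j ≤ N, dist (itf f i j x) (itf f i j y) < δ) → dist x y < ε)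
    {n : ℕ} {x y : X 0} (hxy : ∀ k < n + N + 1, dist (it0 f k x) (it0 f k y) < δ)
    {j : ℕ} (hj : j ≤ n) : dist (it0 f j x) (it0 f j y) < ε :=
  hN j _ _ fun l hl => by
    rw [itf_it0, itf_it0]
    exact hxy (j + l) (by omega)

/-- Coding each point by the `δ/2`-centres visited by its first `n + N + 1` iterates is
injective on an `(n, ε)`-separated set, by expansivity. -/
lemma card_le_pow_of_separated {m : ℕ}
    (hm : ∀ n, ∃ s : Finset (X n), s.card ≤ m ∧ ∀ x : X n, ∃ c ∈ s, dist x c < δ / 2)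
    (hN : ∀ i, ∀ x y : X i,
      (∀ j ≤ N, dist (itf f i j x) (itf f i j y) < δ) → dist x y < ε)
    {n : ℕ} {E : Finset (X 0)}
    (hE : ∀ x ∈ E, ∀ y ∈ E, x ≠ y → ∃ j ≤ n, ε ≤ dist (it0 f j x) (it0 f j y)) :
    E.card ≤ m ^ (n + N + 1) := by
  classical
  choose s hs_card c hc_mem hc_dist using hm
  let code : X 0 → ∀ k : Fin (n + N + 1), X k := fun x k => c k (it0 f k x)
  have hcode_inj : Set.InjOn code E := by
    intro x hx y hy hxy
    by_contra hne
    obtain ⟨j, hj, hsep⟩ := hE x hx y hy hne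
    have hclose : ∀ k < n + N + 1, dist (it0 f k x) (it0 f k y) < δ := fun k hk => by
      have hc : c k (it0 f k x) = c k (it0 f k y) := congrFun hxy ⟨k, hk⟩
      calc dist (it0 f k x) (it0 f k y)
          ≤ dist (it0 f k x) (c k (it0 f k x)) + dist (it0 f k y) (c k (it0 f k y)) := by
            rw [hc]; exact dist_triangle_right _ _ _
        _ < δ / 2 + δ / 2 := add_lt_add (hc_dist _ _) (hc_dist _ _)
        _ = δ := add_halves δ
    exact hsep.not_gt (dist_it0_lt_of_forall_dist_it0_lt f hN hclose hj)
  calc E.card ≤ (Fintype.piFinset fun k : Fin (n + N + 1) => s k).card :=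
        Finset.card_le_card_of_injOn code
          (fun x _ => Fintype.mem_piFinset.2 fun k => hc_mem _ _) hcode_inj
    _ = ∏ k : Fin (n + N + 1), (s k).card := Fintype.card_piFinset _
    _ ≤ m ^ (n + N + 1) := by
        simpa using Finset.prod_le_pow_card Finset.univ (fun k : Fin (n + N + 1) => (s k).card) m
          fun k _ => hs_card k

lemma rsep_le_pow {m : ℕ}
    (hm : ∀ n, ∃ s : Finset (X n), s.card ≤ m ∧ ∀ x : X n, ∃ c ∈ s, dist x c < δ / 2)
    (hN : ∀ i, ∀ x y : X i,
      (∀ j ≤ N, dist (itf f i j x) (itf f i j y) < δ) → dist x y < ε)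
    (n : ℕ) : rsep f n ε ≤ m ^ (n + N + 1) :=
  csSup_le' fun _ ⟨_, hE, hcard⟩ => hcard ▸ card_le_pow_of_separated f hm hN hE

end Separated

lemma limsup_log_div_le_of_le_pow {r : ℕ → ℕ} {m K : ℕ} (hr : ∀ n, r n ≤ m ^ (n + K)) :
    limsup (fun n : ℕ => ((Real.log (r n) / n : ℝ) : EReal)) atTop ≤ (Real.log m : EReal) := by
  set L := Real.log m
  have hlog : ∀ n, Real.log (r n) ≤ (n + K) * L := fun n => by
    rcases Nat.eq_zero_or_pos (r n) with h | h
    · rw [h, Nat.cast_zero, Real.log_zero]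
      exact mul_nonneg (by positivity) (Real.log_natCast_nonneg m)
    · calc Real.log (r n) ≤ Real.log ((m : ℝ) ^ (n + K)) :=
            Real.log_le_log (by exact_mod_cast h) (by exact_mod_cast hr n)
        _ = (n + K) * L := by rw [Real.log_pow]; push_cast; rfl
  have hbound : ∀ᶠ n : ℕ in atTop, Real.log (r n) / n ≤ L + K * L / n := by
    filter_upwards [eventually_gt_atTop 0] with n hn
    have hn' : (0 : ℝ) < n := by exact_mod_cast hn
    calc Real.log (r n) / n ≤ (n + K) * L / n := by gcongr; exact hlog n
      _ = L + K * L / n := by field_simp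
  have htendsto : Tendsto (fun n : ℕ => L + K * L / n) atTop (nhds L) := by
    simpa using tendsto_const_nhds.add
      (tendsto_const_nhds.div_atTop tendsto_natCast_atTop_atTop : Tendsto (fun n : ℕ => K * L / n) _ _)
  calc limsup (fun n : ℕ => ((Real.log (r n) / n : ℝ) : EReal)) atTop
      ≤ limsup (fun n : ℕ => ((L + K * L / n : ℝ) : EReal)) atTop :=
        limsup_le_limsup (hbound.mono fun _ h => EReal.coe_le_coe_iff.2 h)
          isCobounded_le_of_bot isBounded_le_of_top
    _ = L := (EReal.tendsto_coe.2 htendsto).limsup_eq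

theorem stmt10_general {X : ℕ → Type*} [∀ n, MetricSpace (X n)]
    (f : ∀ n, X n → X (n + 1))
    (δ : ℝ)
    (hsue : ∀ ε > 0, ∃ N : ℕ, 1 ≤ N ∧ ∀ i, ∀ x y : X i,
      (∀ j ≤ N, dist (itf f i j x) (itf f i j y) < δ) → dist x y < ε)
    (mδ : ℕ) (hm : ∀ n, ∃ s : Finset (X n),
      s.card ≤ mδ ∧ ∀ x : X n, ∃ c ∈ s, dist x c < δ / 2) :
    htop f ≤ ((Real.log mδ : ℝ) : EReal) := by
  refine iSup₂_le fun ε hε => ?_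
  obtain ⟨N, -, hN⟩ := hsue ε hε
  exact limsup_log_div_le_of_le_pow fun n => by simpa only [add_assoc] using rsep_le_pow f hm hN n

/-- For a uniformly totally bounded, strongly uniformly expansive system with constant
`δ`, the topological entropy is at most `log m(δ/2)`, where `m(δ/2)` is the uniform
number of `δ/2`-balls needed to cover each `X n`; in particular it is finite. -/
theorem stmt10 {X : ℕ → Type*} [∀ n, MetricSpace (X n)] [∀ n, CompactSpace (X n)]
    (f : ∀ n, X n → X (n + 1)) (hf : ∀ n, Continuous (f n))
    (hutb : ∀ ε > 0, ∃ m : ℕ, ∀ n, ∃ s : Finset (X n),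
      s.card ≤ m ∧ ∀ x : X n, ∃ c ∈ s, dist x c < ε)
    (δ : ℝ) (hδ : 0 < δ)
    (hsue : ∀ ε > 0, ∃ N : ℕ, 1 ≤ N ∧ ∀ i, ∀ x y : X i,
      (∀ j ≤ N, dist (itf f i j x) (itf f i j y) < δ) → dist x y < ε)
    (mδ : ℕ) (hm : ∀ n, ∃ s : Finset (X n),
      s.card ≤ mδ ∧ ∀ x : X n, ∃ c ∈ s, dist x c < δ / 2) :
    htop f ≤ ((Real.log mδ : ℝ) : EReal) :=
  stmt10_general f δ hsue mδ hm
end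

section
/- Let (X_n, d_n) be compact metric spaces, f_n : X_n → X_{n+1} continuous, and U_n open covers of X_n with Lebesgue numbers uniformly bounded below by δ > 0. Suppose the sequence X_∞ is uniformly totally bounded and the diameters diam(⋁_{i=1}^n f_k^{-i} U_{k+i}) converge to 0 as n → ∞ uniformly in k. Then X_0 is finite. -/
theorem hcongr_f {X : ℕ → Type*} (f : ∀ n, X n → X (n + 1)) {a b : ℕ} (h : a = b)
    {x : X a} {y : X b} (hxy : HEq x y) : HEq (f a x) (f b y) := by
  subst h
  rw [eq_of_heq hxy]

theorem itf_shift {X : ℕ → Type*} (f : ∀ n, X n → X (n + 1)) (k : ℕ) :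
    ∀ (i : ℕ) (x : X k), HEq (itf f k (i + 1) x) (itf f (k + 1) i (f k x)) := by
  intro i
  induction i with
  | zero => intro x; exact HEq.rfl
  | succ i ih =>
    intro x
    show HEq (f (k + (i + 1)) (itf f k (i + 1) x)) (f (k + 1 + i) (itf f (k + 1) i (f k x)))
    exact hcongr_f f (by omega) (ih x)

def castSet {X : ℕ → Type*} {a b : ℕ} (h : a = b) (s : Set (X a)) : Set (X b) := h ▸ s

theorem mem_castSet {X : ℕ → Type*} {a b : ℕ} (h : a = b) (s : Set (X a))
    {x : X a} {y : X b} (hxy : HEq x y) : y ∈ castSet h s ↔ x ∈ s := by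
  subst h
  rw [eq_of_heq hxy]
  exact Iff.rfl

theorem castSet_mem {X : ℕ → Type*} (U : ∀ n, Set (Set (X n))) {a b : ℕ} (h : a = b)
    {s : Set (X a)} (hs : s ∈ U a) : castSet h s ∈ U b := by
  subst h
  exact hs

/-- Shift an itinerary at base `k+1` down to base `k`, inserting `w` at position `1`. -/
def shiftItin {X : ℕ → Type*} (k : ℕ) (w : Set (X (k + 1)))
    (u : ∀ i, Set (X (k + 1 + i))) : ∀ i, Set (X (k + i))
  | 0 => Set.univ
  | 1 => w
  | (i + 2) => castSet (by omega : k + 1 + (i + 1) = k + (i + 2)) (u (i + 1))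

/-- If `U_n` are open covers with Lebesgue numbers uniformly bounded below by `δ > 0`,
the sequence of spaces is uniformly totally bounded, and the diameters of the joins
`⋁_{i=1}^n f_k^{-i} U_{k+i}` tend to `0` uniformly in `k`, then `X 0` is finite. -/
theorem stmt11 {X : ℕ → Type*} [∀ n, MetricSpace (X n)] [∀ n, CompactSpace (X n)]
    (f : ∀ n, X n → X (n + 1)) (hf : ∀ n, Continuous (f n))
    (U : ∀ n, Set (Set (X n)))
    (hopen : ∀ n, ∀ u ∈ U n, IsOpen u)
    (hcover : ∀ n, ⋃₀ U n = Set.univ)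
    (δ : ℝ) (hδ : 0 < δ)
    (hleb : ∀ n, ∀ x : X n, ∃ u ∈ U n, Metric.ball x δ ⊆ u)
    (hutb : ∀ ε > 0, ∃ m : ℕ, ∀ n, ∃ s : Finset (X n),
      s.card ≤ m ∧ ∀ x : X n, ∃ c ∈ s, dist x c < ε)
    (hdiam : ∀ ε > 0, ∃ N : ℕ, ∀ n ≥ N, ∀ k : ℕ, ∀ u : ∀ i : ℕ, Set (X (k + i)),
      (∀ i : ℕ, 1 ≤ i → i ≤ n → u i ∈ U (k + i)) →
      EMetric.diam (⋂ i ∈ Finset.Icc 1 n, (itf f k i) ⁻¹' (u i)) ≤ ENNReal.ofReal ε) :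
    Finite (X 0) := by
  classical
  obtain ⟨m, hm⟩ := hutb δ hδ
  -- finite subcovers of size ≤ m
  have hA : ∀ n, ∃ G : Finset (Set (X n)), G.card ≤ m ∧ (∀ g ∈ G, g ∈ U n) ∧
      ∀ x : X n, ∃ g ∈ G, x ∈ g := by
    intro n
    obtain ⟨s, hcard, hs⟩ := hm n
    have hch : ∀ c : X n, ∃ u, u ∈ U n ∧ Metric.ball c δ ⊆ u := by
      intro c; obtain ⟨u, hu1, hu2⟩ := hleb n c; exact ⟨u, hu1, hu2⟩
    choose g hgU hgb using hch
    refine ⟨s.image g, le_trans Finset.card_image_le hcard, ?_, ?_⟩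
    · intro u hu; obtain ⟨c, _, rfl⟩ := Finset.mem_image.mp hu; exact hgU c
    · intro x
      obtain ⟨c, hc, hd⟩ := hs x
      exact ⟨g c, Finset.mem_image_of_mem g hc, hgb c (Metric.mem_ball.mpr hd)⟩
  obtain ⟨n₀, hn₀⟩ := hdiam (δ / 2) (by positivity)
  -- covers of X k by itineraries of length n, of cardinality ≤ m ^ n
  have hB : ∀ k n, ∃ F : Finset (∀ i, Set (X (k + i))), F.card ≤ m ^ n ∧
      (∀ u ∈ F, ∀ i, 1 ≤ i → i ≤ n → u i ∈ U (k + i)) ∧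
      (∀ x : X k, ∃ u ∈ F, ∀ i, 1 ≤ i → i ≤ n → itf f k i x ∈ u i) := by
    intro k n
    induction n with
    | zero =>
      refine ⟨{fun _ => Set.univ}, by simp, ?_, ?_⟩
      · intro u hu i h1 h2; omega
      · intro x; exact ⟨fun _ => Set.univ, Finset.mem_singleton_self _, fun i h1 h2 => by omega⟩
    | succ n ihn =>
      obtain ⟨F, hFc, hFU, hFcov⟩ := ihn
      obtain ⟨G, hGc, hGU, hGcov⟩ := hA (k + (n + 1))
      refine ⟨(F ×ˢ G).image (fun p => Function.update p.1 (n + 1) p.2), ?_, ?_, ?_⟩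
      · calc ((F ×ˢ G).image (fun p => Function.update p.1 (n + 1) p.2)).card
            ≤ (F ×ˢ G).card := Finset.card_image_le
          _ = F.card * G.card := Finset.card_product _ _
          _ ≤ m ^ n * m := Nat.mul_le_mul hFc hGc
          _ = m ^ (n + 1) := (pow_succ m n).symm
      · intro u hu i h1 h2
        obtain ⟨p, hp, rfl⟩ := Finset.mem_image.mp hu
        obtain ⟨hp1, hp2⟩ := Finset.mem_product.mp hp
        by_cases hi : i = n + 1
        · subst hi; simpa [Function.update_self] using hGU _ hp2
        · rw [Function.update_of_ne hi]; exact hFU _ hp1 i h1 (by omega)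
      · intro x
        obtain ⟨u, hu, hucov⟩ := hFcov x
        obtain ⟨g, hg, hgx⟩ := hGcov (itf f k (n + 1) x)
        have hpmem : (u, g) ∈ F ×ˢ G := Finset.mem_product.mpr ⟨hu, hg⟩
        refine ⟨Function.update u (n + 1) g,
          Finset.mem_image_of_mem (fun p => Function.update p.1 (n + 1) p.2) hpmem, ?_⟩
        intro i h1 h2
        by_cases hi : i = n + 1
        · subst hi; simpa [Function.update_self] using hgx
        · rw [Function.update_of_ne hi]; exact hucov i h1 (by omega)
  -- the main uniform-cardinality lemma
  have MAIN : ∀ j k, ∃ F : Finset (∀ i, Set (X (k + i))), F.card ≤ m ^ n₀ ∧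
      (∀ u ∈ F, ∀ i, 1 ≤ i → i ≤ n₀ + j → u i ∈ U (k + i)) ∧
      (∀ x : X k, ∃ u ∈ F, ∀ i, 1 ≤ i → i ≤ n₀ + j → itf f k i x ∈ u i) := by
    intro j
    induction j with
    | zero => intro k; simpa using hB k n₀
    | succ j ih =>
      intro k
      rcases isEmpty_or_nonempty (X (k + 1)) with he | hne
      · have hek : IsEmpty (X k) := ⟨fun x => he.false (f k x)⟩
        exact ⟨∅, by simp, by simp, fun x => (hek.false x).elim⟩
      · obtain ⟨F, hFc, hFU, hFcov⟩ := ih (k + 1)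
        obtain ⟨w₀, hw₀, -⟩ := hleb (k + 1) hne.some
        have hw : ∀ u : ∀ i, Set (X (k + 1 + i)), ∃ v, v ∈ U (k + 1) ∧
            ((∀ i, 1 ≤ i → i ≤ n₀ + j → u i ∈ U (k + 1 + i)) →
              (⋂ i ∈ Finset.Icc 1 (n₀ + j), (itf f (k + 1) i) ⁻¹' (u i)) ⊆ v) := by
          intro u
          by_cases hval : ∀ i, 1 ≤ i → i ≤ n₀ + j → u i ∈ U (k + 1 + i)
          · by_cases hD : (⋂ i ∈ Finset.Icc 1 (n₀ + j), (itf f (k + 1) i) ⁻¹' (u i)).Nonempty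
            · obtain ⟨y₁, hy₁⟩ := hD
              obtain ⟨v, hvU, hvb⟩ := hleb (k + 1) y₁
              refine ⟨v, hvU, fun _ y hy => hvb ?_⟩
              have hdm := hn₀ (n₀ + j) (by omega) (k + 1) u hval
              have he1 : edist y y₁ ≤ ENNReal.ofReal (δ / 2) :=
                le_trans (EMetric.edist_le_diam_of_mem hy hy₁) hdm
              have hd2 : dist y y₁ ≤ δ / 2 := by
                rwa [edist_dist, ENNReal.ofReal_le_ofReal_iff (by positivity)] at he1
              exact Metric.mem_ball.mpr (by linarith)
            · exact ⟨w₀, hw₀, fun _ => by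
                rw [Set.not_nonempty_iff_eq_empty.mp hD]; exact Set.empty_subset _⟩
          · exact ⟨w₀, hw₀, fun h => absurd h hval⟩
        choose wu hwuU hwusub using hw
        refine ⟨F.image (fun u => shiftItin k (wu u) u),
          le_trans Finset.card_image_le hFc, ?_, ?_⟩
        · intro v hv i h1 h2
          obtain ⟨u, hu, rfl⟩ := Finset.mem_image.mp hv
          match i, h1, h2 with
          | 1, _, _ => exact hwuU u
          | (i' + 2), _, h2 =>
            exact castSet_mem U _ (hFU u hu (i' + 1) (by omega) (by omega))
        · intro x
          obtain ⟨u, hu, hucov⟩ := hFcov (f k x)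
          refine ⟨shiftItin k (wu u) u, Finset.mem_image_of_mem _ hu, ?_⟩
          intro i h1 h2
          match i, h1, h2 with
          | 1, _, _ =>
            show f k x ∈ wu u
            refine hwusub u (hFU u hu) ?_
            exact Set.mem_iInter₂.mpr fun i hi =>
              hucov i (Finset.mem_Icc.mp hi).1 (Finset.mem_Icc.mp hi).2
          | (i' + 2), _, h2 =>
            exact (mem_castSet _ _ ((itf_shift f k (i' + 1) x).symm)).mpr
              (hucov (i' + 1) (by omega) (by omega))
  -- covers of X 0 of bounded cardinality by sets of arbitrarily small diameter
  have key : ∀ ε > 0, ∃ n : ℕ, ∃ F : Finset (∀ i, Set (X (0 + i))), F.card ≤ m ^ n₀ ∧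
      (∀ u ∈ F, EMetric.diam (⋂ i ∈ Finset.Icc 1 n, (itf f 0 i) ⁻¹' (u i)) ≤
        ENNReal.ofReal ε) ∧
      (∀ x : X 0, ∃ u ∈ F, ∀ i, 1 ≤ i → i ≤ n → itf f 0 i x ∈ u i) := by
    intro ε hε
    obtain ⟨N₂, hN₂⟩ := hdiam ε hε
    obtain ⟨F, hFc, hFU, hFcov⟩ := MAIN N₂ 0
    exact ⟨n₀ + N₂, F, hFc, fun u hu => hN₂ (n₀ + N₂) (by omega) 0 u (hFU u hu), hFcov⟩
  -- conclude
  by_contra hfin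
  have hinf : Infinite (X 0) := not_finite_iff_infinite.mp hfin
  obtain ⟨s, hscard⟩ := Infinite.exists_subset_card_eq (X 0) (m ^ n₀ + 2)
  set T := (s ×ˢ s).filter (fun p => p.1 ≠ p.2) with hT
  have hTne : T.Nonempty := by
    obtain ⟨a, ha, b, hb, hab⟩ := Finset.one_lt_card.mp (by omega : 1 < s.card)
    exact ⟨(a, b), by simp [hT, Finset.mem_filter, Finset.mem_product, ha, hb, hab]⟩
  set d₀ := T.inf' hTne (fun p => dist p.1 p.2) with hd₀
  have hd₀pos : 0 < d₀ := by
    rw [hd₀, Finset.lt_inf'_iff]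
    intro p hp
    exact dist_pos.mpr (Finset.mem_filter.mp hp).2
  obtain ⟨n, F, hFc, hFd, hFcov⟩ := key (d₀ / 2) (by positivity)
  have hch : ∀ x : X 0, ∃ u, u ∈ F ∧ ∀ i, 1 ≤ i → i ≤ n → itf f 0 i x ∈ u i := by
    intro x; obtain ⟨u, h1, h2⟩ := hFcov x; exact ⟨u, h1, h2⟩
  choose φ hφF hφm using hch
  have hinj : Set.InjOn φ ↑s := by
    intro a ha b hb hab
    by_contra hne2
    have hmemA : a ∈ ⋂ i ∈ Finset.Icc 1 n, (itf f 0 i) ⁻¹' (φ a i) :=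
      Set.mem_iInter₂.mpr fun i hi => hφm a i (Finset.mem_Icc.mp hi).1 (Finset.mem_Icc.mp hi).2
    have hmemB : b ∈ ⋂ i ∈ Finset.Icc 1 n, (itf f 0 i) ⁻¹' (φ a i) := by
      rw [hab]
      exact Set.mem_iInter₂.mpr fun i hi =>
        hφm b i (Finset.mem_Icc.mp hi).1 (Finset.mem_Icc.mp hi).2
    have hedist := le_trans (EMetric.edist_le_diam_of_mem hmemA hmemB) (hFd (φ a) (hφF a))
    have hdist : dist a b ≤ d₀ / 2 := by
      rwa [edist_dist, ENNReal.ofReal_le_ofReal_iff (by positivity)] at hedist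
    have hle : d₀ ≤ dist a b := by
      have hmemT : (a, b) ∈ T := by
        simp only [hT, Finset.mem_filter, Finset.mem_product]
        exact ⟨⟨ha, hb⟩, hne2⟩
      exact Finset.inf'_le (fun p => dist p.1 p.2) hmemT
    linarith
  have hcle := Finset.card_le_card_of_injOn φ (fun a ha => hφF a) hinj
  omega
end

section
/- Let (X_n, d_n) be a uniformly totally bounded sequence of compact metric spaces and f_n : X_n → X_{n+1} homeomorphisms with {f_n^{-1}} uniformly equicontinuous. If the nonautonomous system (X_n, f_n) is strongly uniformly expansive, then X_0 (and hence every X_n) is finite. -/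
lemma itf_succ' {X : ℕ → Type*} (f : ∀ n, X n → X (n + 1)) (i n : ℕ) (x : X i) :
    itf f i (n + 1) x = f (i + n) (itf f i n x) := rfl

lemma f_congr_heq {X : ℕ → Type*} (f : ∀ n, X n → X (n + 1)) {a b : ℕ} (h : a = b)
    {u : X a} {v : X b} (huv : HEq u v) : HEq (f a u) (f b v) := by
  subst h; rw [eq_of_heq huv]

lemma itf_add_heq {X : ℕ → Type*} (f : ∀ n, X n → X (n + 1)) (i m : ℕ) (x : X i) :
    ∀ k, HEq (itf f (i + m) k (itf f i m x)) (itf f i (m + k) x)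
  | 0 => HEq.rfl
  | k + 1 => f_congr_heq f (Nat.add_assoc i m k) (itf_add_heq f i m x k)

lemma dist_congr_heq {X : ℕ → Type*} [∀ n, MetricSpace (X n)] {a b : ℕ} (h : a = b)
    {u v : X a} {u' v' : X b} (hu : HEq u u') (hv : HEq v v') : dist u v = dist u' v' := by
  subst h; rw [eq_of_heq hu, eq_of_heq hv]

lemma dist_itf_add {X : ℕ → Type*} [∀ n, MetricSpace (X n)] (f : ∀ n, X n → X (n + 1))
    (i m k : ℕ) (x y : X i) :
    dist (itf f (i + m) k (itf f i m x)) (itf f (i + m) k (itf f i m y))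
      = dist (itf f i (m + k) x) (itf f i (m + k) y) :=
  dist_congr_heq (Nat.add_assoc i m k) (itf_add_heq f i m x k) (itf_add_heq f i m y k)

/-- If the spaces are uniformly totally bounded, every `f_n` is a homeomorphism,
the family of inverses is uniformly equicontinuous, and the system is strongly
uniformly expansive, then `X 0` (and hence every `X n`) is finite. -/
theorem stmt12 {X : ℕ → Type*} [∀ n, MetricSpace (X n)] [∀ n, CompactSpace (X n)]
    (f : ∀ n, X n → X (n + 1)) (hf : ∀ n, Continuous (f n))
    (finv : ∀ n, X (n + 1) → X n)
    (hinv₁ : ∀ n x, finv n (f n x) = x) (hinv₂ : ∀ n y, f n (finv n y) = y)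
    (hinveq : ∀ ε > 0, ∃ η > 0, ∀ n, ∀ u v : X (n + 1),
      dist u v < η → dist (finv n u) (finv n v) < ε)
    (hutb : ∀ ε > 0, ∃ m : ℕ, ∀ n, ∃ s : Finset (X n),
      s.card ≤ m ∧ ∀ x : X n, ∃ c ∈ s, dist x c < ε)
    (hsue : ∃ δ > 0, ∀ ε > 0, ∃ N : ℕ, 1 ≤ N ∧ ∀ i, ∀ x y : X i,
      (∀ j ≤ N, dist (itf f i j x) (itf f i j y) < δ) → dist x y < ε) :
    ∀ n, Finite (X n) := by
  classical
  obtain ⟨δ, hδ, hexp⟩ := hsue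
  obtain ⟨η, hη, hinvδ⟩ := hinveq δ hδ
  set ε := min η δ with hεdef
  have hεpos : 0 < ε := lt_min hη hδ
  have hεη : ε ≤ η := min_le_left _ _
  have hεδ : ε ≤ δ := min_le_right _ _
  obtain ⟨N, hN1, hNexp⟩ := hexp ε hεpos
  obtain ⟨m, hm⟩ := hutb (ε / 2) (by positivity)
  choose s hscard hsnet using hm
  -- If all forward iterates stay δ-close, the points are equal.
  have claim2 : ∀ (n : ℕ) (x y : X n),
      (∀ j, dist (itf f n j x) (itf f n j y) < δ) → x = y := by
    intro n x y hall
    by_contra hxy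
    have hd : 0 < dist x y := dist_pos.mpr hxy
    obtain ⟨N', _, hN'⟩ := hexp (dist x y) hd
    exact absurd (hN' n x y fun j _ => hall j) (lt_irrefl _)
  -- A δ-window [L, L+N] propagates leftwards.
  have claim1 : ∀ (n : ℕ) (x y : X n) (L : ℕ),
      (∀ j, L ≤ j → j ≤ L + N → dist (itf f n j x) (itf f n j y) < δ) →
      ∀ j ≤ L + N, dist (itf f n j x) (itf f n j y) < δ := by
    intro n x y L
    induction L with
    | zero => intro hw j hj; exact hw j (Nat.zero_le j) hj
    | succ L ih =>
      intro hw
      have hwin : ∀ j ≤ N, dist (itf f (n + (L + 1)) j (itf f n (L + 1) x))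
          (itf f (n + (L + 1)) j (itf f n (L + 1) y)) < δ := by
        intro j hj
        rw [dist_itf_add]
        exact hw (L + 1 + j) (Nat.le_add_right _ _) (by omega)
      have hclose : dist (itf f n (L + 1) x) (itf f n (L + 1) y) < ε :=
        hNexp (n + (L + 1)) _ _ hwin
      have hstep : dist (itf f n L x) (itf f n L y) < δ := by
        have h2 : dist (finv (n + L) (itf f n (L + 1) x))
            (finv (n + L) (itf f n (L + 1) y)) < δ :=
          hinvδ (n + L) _ _ (lt_of_lt_of_le hclose hεη)
        rwa [itf_succ', itf_succ', hinv₁, hinv₁] at h2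
      have hw' : ∀ j, L ≤ j → j ≤ L + N → dist (itf f n j x) (itf f n j y) < δ := by
        intro j hj1 hj2
        rcases Nat.eq_or_lt_of_le hj1 with h | h
        · rw [← h]; exact hstep
        · exact hw j h (by omega)
      intro j hj
      rcases Nat.lt_or_ge j (L + 1 + N) with h | h
      · exact ih hw' j (by omega)
      · have hje : j = L + 1 + N := le_antisymm hj h
        subst hje
        exact hw _ (by omega) (by omega)
  intro n
  by_contra hfin
  have hinf : Infinite (X n) := not_finite_iff_infinite.mp hfin
  set M := m ^ (N + 1) with hM
  let e := Infinite.natEmbedding (X n)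
  let S : Finset (X n) := (Finset.range (M + 1)).map e
  have hScard : S.card = M + 1 := by simp [S]
  have hpair : ∀ L : ℕ, ∃ p : X n × X n, p.1 ∈ S ∧ p.2 ∈ S ∧ p.1 ≠ p.2 ∧
      ∀ j ≤ L + N, dist (itf f n j p.1) (itf f n j p.2) < δ := by
    intro L
    have hc : ∀ x : X n, ∀ j : Fin (N + 1),
        ∃ c ∈ s (n + (L + (j : ℕ))), dist (itf f n (L + (j : ℕ)) x) c < ε / 2 :=
      fun x j => hsnet (n + (L + (j : ℕ))) (itf f n (L + (j : ℕ)) x)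
    choose code hcode1 hcode2 using hc
    have hmaps : ∀ x ∈ S,
        code x ∈ Fintype.piFinset (fun j : Fin (N + 1) => s (n + (L + (j : ℕ)))) := by
      intro x _
      rw [Fintype.mem_piFinset]
      exact hcode1 x
    have hcard : (Fintype.piFinset (fun j : Fin (N + 1) => s (n + (L + (j : ℕ))))).card
        < S.card := by
      rw [hScard, Fintype.card_piFinset]
      have h1 : ∏ j : Fin (N + 1), (s (n + (L + (j : ℕ)))).card ≤ m ^ (N + 1) := by
        calc ∏ j : Fin (N + 1), (s (n + (L + (j : ℕ)))).card
            ≤ m ^ (Finset.univ : Finset (Fin (N + 1))).card :=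
              Finset.prod_le_pow_card _ _ _ (fun j _ => hscard _)
          _ = m ^ (N + 1) := by rw [Finset.card_univ, Fintype.card_fin]
      omega
    obtain ⟨x, hxS, y, hyS, hxy, hcodeeq⟩ :=
      Finset.exists_ne_map_eq_of_card_lt_of_maps_to hcard hmaps
    refine ⟨(x, y), hxS, hyS, hxy, ?_⟩
    have key : ∀ k ≤ N, dist (itf f n (L + k) x) (itf f n (L + k) y) < ε := by
      intro k hk
      have h1 := hcode2 x ⟨k, by omega⟩
      have h2 := hcode2 y ⟨k, by omega⟩
      have heqc : code x ⟨k, by omega⟩ = code y ⟨k, by omega⟩ := congrFun hcodeeq _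
      calc dist (itf f n (L + k) x) (itf f n (L + k) y)
          ≤ dist (itf f n (L + k) x) (code x ⟨k, by omega⟩)
            + dist (code x ⟨k, by omega⟩) (itf f n (L + k) y) := dist_triangle _ _ _
        _ < ε / 2 + ε / 2 := by
            refine add_lt_add h1 ?_
            rw [heqc, dist_comm]
            exact h2
        _ = ε := by ring
    refine claim1 n x y L ?_
    intro j hj1 hj2
    obtain ⟨k, rfl⟩ : ∃ k, j = L + k := ⟨j - L, by omega⟩
    exact lt_of_lt_of_le (key k (by omega)) hεδ
  choose p hp1 hp2 hp3 hp4 using hpair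
  let g : ℕ → ↥S × ↥S := fun L => (⟨(p L).1, hp1 L⟩, ⟨(p L).2, hp2 L⟩)
  obtain ⟨q, hq⟩ := Finite.exists_infinite_fiber g
  have hqinf : (g ⁻¹' {q}).Infinite := Set.infinite_coe_iff.mp hq
  set x : X n := (q.1 : X n) with hx
  set y : X n := (q.2 : X n) with hy
  have hcomp : ∀ L, g L = q → (p L).1 = x ∧ (p L).2 = y := by
    intro L hgL
    constructor
    · have := congrArg (fun r : ↥S × ↥S => (r.1 : X n)) hgL
      simpa [g] using this
    · have := congrArg (fun r : ↥S × ↥S => (r.2 : X n)) hgL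
      simpa [g] using this
  have hall : ∀ j, dist (itf f n j x) (itf f n j y) < δ := by
    intro j
    obtain ⟨L, hLmem, hLgt⟩ := hqinf.exists_gt j
    obtain ⟨hLx, hLy⟩ := hcomp L hLmem
    have := hp4 L j (by omega)
    rwa [hLx, hLy] at this
  have hne : x ≠ y := by
    obtain ⟨L, hLmem, _⟩ := hqinf.exists_gt 0
    obtain ⟨hLx, hLy⟩ := hcomp L hLmem
    rw [← hLx, ← hLy]
    exact hp3 L
  exact hne (claim2 n x y hall)
end

section
/- Let M be a compact metric space with Borel probability measures, and let μ_n, ν_n be sequences of Borel probability measures absolutely continuous with respect to a reference measure m, with densities φ_n, ψ_n bounded below by κ_* > 0. Suppose ∫_A |φ_n − ψ_n| dm ≤ m(A) K μ^n for all Borel sets A, with constants K > 0 and μ ∈ (0,1). Then for any finite measurable partition 𝒜 of M all of whose elements have m-measure less than e^{-1}, one has |∑_{A∈𝒜} μ_n(A) log μ_n(A) − ∑_{A∈𝒜} ν_n(A) log ν_n(A)| ≤ −Kμ^n(1 + log κ_*) + K μ^n H_m(𝒜), where H_m(𝒜) = −∑_{A∈𝒜} m(A) log m(A). -/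
/-!
Write `a = μₙ(A)`, `b = νₙ(A)`, `t = m(A)` and `c = Kμⁿ`, so that `κt ≤ a, b` and `|a - b| ≤ ct`.
By convexity of `x log x`, `a log a - b log b ≤ (a - b)(1 + log a)`; since `∑ (a - b) = 0` the
term `1 + log a` may be replaced by `X = 1 + log (a / κ) ≥ 1 + log t`. As `1 + log t < 0`, this
gives `|X| ≤ X - 2(1 + log t)`, and together with `t log a ≤ t log t + a - t` one gets
`(a - b) X ≤ c t (-1 - log (κt)) + c (a - t)`. The correction terms `c (a - t)` sum to zero
because `∑ a = ∑ t = 1`, and the main terms sum to `-c(1 + log κ) + c H_m(𝒜)`.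
-/

open MeasureTheory Real

namespace Real

lemma sub_le_mul_log_sub_log {a b : ℝ} (ha : 0 < a) (hb : 0 ≤ b) :
    b - a ≤ b * (log b - log a) := by
  rcases hb.eq_or_lt with rfl | hb
  · simpa using ha.le
  have h := one_sub_inv_le_log_of_pos (div_pos hb ha)
  rw [log_div hb.ne' ha.ne', inv_div] at h
  calc b - a = b * (1 - a / b) := by field_simp
    _ ≤ b * (log b - log a) := mul_le_mul_of_nonneg_left h hb.le

lemma mul_log_sub_mul_log_le {a b : ℝ} (ha : 0 < a) (hb : 0 ≤ b) :
    a * log a - b * log b ≤ (a - b) * (1 + log a) := by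
  linarith [sub_le_mul_log_sub_log ha hb]

lemma mul_log_sub_mul_log_sub_le {κ c t a b : ℝ} (hκ : 0 < κ) (hc : 0 ≤ c) (ht : 0 ≤ t)
    (ht_small : t < exp (-1)) (ha : κ * t ≤ a) (hb : κ * t ≤ b) (hab : |a - b| ≤ c * t) :
    a * log a - b * log b - (a - b) * log κ ≤ c * (t * (-1 - log (κ * t)) + (a - t)) := by
  rcases ht.eq_or_lt with rfl | ht
  · have hab : a = b := sub_eq_zero.1 (abs_nonpos_iff.1 (by simpa using hab))
    subst hab
    simpa using mul_nonneg hc (by simpa using ha)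
  have ha' : 0 < a := (mul_pos hκ ht).trans_le ha
  have hb' : 0 < b := (mul_pos hκ ht).trans_le hb
  have hlog_t : 1 + log t < 0 := by
    have := log_lt_log ht ht_small
    rw [log_exp] at this
    linarith
  have hX : 1 + log t ≤ 1 + log a - log κ := by
    have := log_le_log (mul_pos hκ ht) ha
    rw [log_mul hκ.ne' ht.ne'] at this
    linarith
  have hX_abs : |1 + log a - log κ| ≤ (1 + log a - log κ) - 2 * (1 + log t) :=
    abs_le.2 ⟨by linarith, by linarith⟩
  have hgibbs : t * log a ≤ t * log t + (a - t) := by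
    linarith [sub_le_mul_log_sub_log ha' ht.le]
  calc a * log a - b * log b - (a - b) * log κ
      ≤ (a - b) * (1 + log a - log κ) := by linarith [mul_log_sub_mul_log_le ha' hb'.le]
    _ ≤ |a - b| * |1 + log a - log κ| := by rw [← abs_mul]; exact le_abs_self _
    _ ≤ c * t * ((1 + log a - log κ) - 2 * (1 + log t)) :=
        mul_le_mul hab hX_abs (abs_nonneg _) (by positivity)
    _ = c * (t + t * log a - t * log κ - 2 * t - 2 * (t * log t)) := by ring
    _ ≤ c * (t * (-1 - log (κ * t)) + (a - t)) := by
        rw [log_mul hκ.ne' ht.ne']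
        exact mul_le_mul_of_nonneg_left (by linarith) hc

end Real

section FiniteEntropy

variable {ι : Type*} {s : Finset ι} {a b t : ι → ℝ} {κ c : ℝ}

lemma sum_mul_log_sub_sum_mul_log_le (hκ : 0 < κ) (hc : 0 ≤ c) (ht : ∀ i ∈ s, 0 ≤ t i)
    (ht_small : ∀ i ∈ s, t i < exp (-1)) (ha : ∀ i ∈ s, κ * t i ≤ a i)
    (hb : ∀ i ∈ s, κ * t i ≤ b i) (hab : ∀ i ∈ s, |a i - b i| ≤ c * t i)
    (hsa : ∑ i ∈ s, a i = ∑ i ∈ s, t i) (hsb : ∑ i ∈ s, b i = ∑ i ∈ s, t i) :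
    ∑ i ∈ s, a i * log (a i) - ∑ i ∈ s, b i * log (b i) ≤
      c * ∑ i ∈ s, t i * (-1 - log (κ * t i)) := by
  have hsum := Finset.sum_le_sum fun i hi =>
    mul_log_sub_mul_log_sub_le hκ hc (ht i hi) (ht_small i hi) (ha i hi) (hb i hi) (hab i hi)
  simp only [mul_add, Finset.sum_add_distrib, ← Finset.mul_sum, Finset.sum_sub_distrib,
    ← Finset.sum_mul, hsa, hsb] at hsum
  linarith

lemma abs_sum_mul_log_sub_sum_mul_log_le (hκ : 0 < κ) (hc : 0 ≤ c) (ht : ∀ i ∈ s, 0 ≤ t i)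
    (ht_small : ∀ i ∈ s, t i < exp (-1)) (ha : ∀ i ∈ s, κ * t i ≤ a i)
    (hb : ∀ i ∈ s, κ * t i ≤ b i) (hab : ∀ i ∈ s, |a i - b i| ≤ c * t i)
    (hsa : ∑ i ∈ s, a i = 1) (hsb : ∑ i ∈ s, b i = 1) (hst : ∑ i ∈ s, t i = 1) :
    |∑ i ∈ s, a i * log (a i) - ∑ i ∈ s, b i * log (b i)| ≤
      -c * (1 + log κ) + c * (-∑ i ∈ s, t i * log (t i)) := by
  have hba : ∀ i ∈ s, |b i - a i| ≤ c * t i := fun i hi => abs_sub_comm (a i) (b i) ▸ hab i hi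
  have hrhs : c * ∑ i ∈ s, t i * (-1 - log (κ * t i)) =
      -c * (1 + log κ) + c * (-∑ i ∈ s, t i * log (t i)) := by
    have hlog : ∀ i ∈ s, t i * (-1 - log (κ * t i)) = -(1 + log κ) * t i - t i * log (t i) := by
      intro i hi
      rcases (ht i hi).eq_or_lt with h | h
      · simp [← h]
      · rw [log_mul hκ.ne' h.ne']; ring
    rw [Finset.sum_congr rfl hlog, Finset.sum_sub_distrib, ← Finset.mul_sum, hst]
    ring
  rw [← hrhs, abs_le]
  constructor
  · linarith [sum_mul_log_sub_sum_mul_log_le hκ hc ht ht_small hb ha hba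
      (hsb.trans hst.symm) (hsa.trans hst.symm)]
  · exact sum_mul_log_sub_sum_mul_log_le hκ hc ht ht_small ha hb hab
      (hsa.trans hst.symm) (hsb.trans hst.symm)

end FiniteEntropy

namespace MeasureTheory

variable {α E : Type*} [MeasurableSpace α] [NormedAddCommGroup E] [NormedSpace ℝ E]
  {μ : Measure α} {𝒜 : Finset (Set α)}

theorem sum_setIntegral_of_partition {f : α → E} (hf : Integrable f μ)
    (hmeas : ∀ A ∈ 𝒜, MeasurableSet A) (hdisj : (𝒜 : Set (Set α)).PairwiseDisjoint id)
    (hcover : ⋃₀ (𝒜 : Set (Set α)) = Set.univ) :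
    ∑ A ∈ 𝒜, ∫ x in A, f x ∂μ = ∫ x, f x ∂μ := by
  rw [← integral_biUnion_finset 𝒜 hmeas hdisj fun A _ => hf.integrableOn,
    ← Finset.set_biUnion_coe, ← Set.sUnion_eq_biUnion, hcover, Measure.restrict_univ]

theorem sum_measureReal_of_partition [IsProbabilityMeasure μ]
    (hmeas : ∀ A ∈ 𝒜, MeasurableSet A) (hdisj : (𝒜 : Set (Set α)).PairwiseDisjoint id)
    (hcover : ⋃₀ (𝒜 : Set (Set α)) = Set.univ) :
    ∑ A ∈ 𝒜, μ.real A = 1 := by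
  simpa using sum_setIntegral_of_partition (integrable_const (μ := μ) (1 : ℝ)) hmeas hdisj hcover

theorem abs_setIntegral_sub_le {f g : α → ℝ} (hf : Integrable f μ) (hg : Integrable g μ)
    (A : Set α) : |∫ x in A, f x ∂μ - ∫ x in A, g x ∂μ| ≤ ∫ x in A, |f x - g x| ∂μ := by
  rw [← integral_sub hf.integrableOn hg.integrableOn]
  exact abs_integral_le_integral_abs

end MeasureTheory

/-- Step 2 of the independence-of-initial-measure theorem: if the densities `φ_n, ψ_n`
(of probability measures `μ_n, ν_n ≪ m`) are bounded below by `κ > 0` and satisfy the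
exponential `L¹` estimate `∫_A |φ_n − ψ_n| dm ≤ m(A) K μⁿ` on all Borel sets `A`, then
for any finite measurable partition `𝒜` whose elements have `m`-measure `< e^{-1}`,
`|∑_A μ_n(A) log μ_n(A) − ∑_A ν_n(A) log ν_n(A)| ≤ −Kμⁿ(1 + log κ) + Kμⁿ H_m(𝒜)`. -/
theorem stmt18 {α : Type*} [MeasurableSpace α]
    (m : Measure α) [IsProbabilityMeasure m]
    (φ ψ : ℕ → α → ℝ) (κ : ℝ) (hκ : 0 < κ)
    (hφlb : ∀ n x, κ ≤ φ n x) (hψlb : ∀ n x, κ ≤ ψ n x)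
    (hφint : ∀ n, Integrable (φ n) m) (hψint : ∀ n, Integrable (ψ n) m)
    (hφ1 : ∀ n, ∫ x, φ n x ∂m = 1) (hψ1 : ∀ n, ∫ x, ψ n x ∂m = 1)
    (K μ : ℝ) (hK : 0 < K) (hμ : μ ∈ Set.Ioo (0 : ℝ) 1)
    (hL1 : ∀ n : ℕ, ∀ A : Set α, MeasurableSet A →
      ∫ x in A, |φ n x - ψ n x| ∂m ≤ (m A).toReal * K * μ ^ n)
    (𝒜 : Finset (Set α))
    (hmeas : ∀ A ∈ 𝒜, MeasurableSet A)
    (hdisj : ∀ A ∈ 𝒜, ∀ B ∈ 𝒜, A ≠ B → Disjoint A B)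
    (hcover : ⋃₀ (𝒜 : Set (Set α)) = Set.univ)
    (hsmall : ∀ A ∈ 𝒜, (m A).toReal < Real.exp (-1)) :
    ∀ n : ℕ,
      |(∑ A ∈ 𝒜, (∫ x in A, φ n x ∂m) * Real.log (∫ x in A, φ n x ∂m)) -
        ∑ A ∈ 𝒜, (∫ x in A, ψ n x ∂m) * Real.log (∫ x in A, ψ n x ∂m)| ≤
      -(K * μ ^ n) * (1 + Real.log κ) +
        K * μ ^ n * (-∑ A ∈ 𝒜, (m A).toReal * Real.log (m A).toReal) := by
  intro n
  have hdisj' : (𝒜 : Set (Set α)).PairwiseDisjoint id := fun A hA B hB => hdisj A hA B hB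
  have hlb : ∀ f : α → ℝ, Integrable f m → (∀ x, κ ≤ f x) →
      ∀ A ∈ 𝒜, κ * m.real A ≤ ∫ x in A, f x ∂m := fun f hf hκf A hA =>
    setIntegral_ge_of_const_le_real (hmeas A hA) (measure_ne_top m A) (fun x _ => hκf x)
      hf.integrableOn
  have hdiff : ∀ A ∈ 𝒜, |∫ x in A, φ n x ∂m - ∫ x in A, ψ n x ∂m| ≤ K * μ ^ n * m.real A := by
    intro A hA
    calc _ ≤ ∫ x in A, |φ n x - ψ n x| ∂m := abs_setIntegral_sub_le (hφint n) (hψint n) A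
      _ ≤ (m A).toReal * K * μ ^ n := hL1 n A (hmeas A hA)
      _ = K * μ ^ n * m.real A := by rw [measureReal_def]; ring
  exact abs_sum_mul_log_sub_sum_mul_log_le hκ (mul_pos hK (pow_pos hμ.1 n)).le
    (fun A _ => measureReal_nonneg) hsmall (hlb _ (hφint n) (hφlb n)) (hlb _ (hψint n) (hψlb n))
    hdiff ((sum_setIntegral_of_partition (hφint n) hmeas hdisj' hcover).trans (hφ1 n))
    ((sum_setIntegral_of_partition (hψint n) hmeas hdisj' hcover).trans (hψ1 n))
    (sum_measureReal_of_partition hmeas hdisj' hcover)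
end
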